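/- Let (E,F) be a uniformly self-similar ends space. Then Homeo(E,F) is uniformly perfect: every element of Homeo(E,F) is a product of at most 3 commutators. -/

import Mathlib

section EndsSpace

variable {E : Type*} [TopologicalSpace E]

/-- A homeomorphism of pairs from `(A, A ∩ F)` to `(B, B ∩ F)`:
a homeomorphism of the subspaces `A → B` carrying `A ∩ F` onto `B ∩ F`. -/
def PairHomeo (F A B : Set E) : Prop :=
  ∃ h : A ≃ₜ B, ∀ x : A, ((h x : E) ∈ F ↔ (x : E) ∈ F)

/-- `(E, F)` is self-similar: every partition of `E` into finitely many pairwise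
disjoint nonempty clopen sets has a piece containing a clopen set `D` with
`(D, D ∩ F)` homeomorphic (as a pair) to `(E, F)`. -/
def SelfSimilarPair (F : Set E) : Prop :=
  ∀ (n : ℕ) (P : Fin n → Set E),
    (∀ i, IsClopen (P i)) → (∀ i, (P i).Nonempty) →
    Pairwise (Function.onFun Disjoint P) → (⋃ i, P i) = Set.univ →
    ∃ i, ∃ D : Set E, IsClopen D ∧ D ⊆ P i ∧ PairHomeo F D Set.univ

/-- The preorder `x ≼ y` on ends: every clopen neighborhood `U` of `y` contains a
clopen set `D` for which there are a clopen neighborhood `V` of `x` and a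
homeomorphism of pairs `(V, V ∩ F) → (D, D ∩ F)`. -/
def EndsLE (F : Set E) (x y : E) : Prop :=
  ∀ U : Set E, IsClopen U → y ∈ U →
    ∃ D : Set E, D ⊆ U ∧ IsClopen D ∧
      ∃ V : Set E, IsClopen V ∧ x ∈ V ∧ PairHomeo F V D

/-- The equivalence `x ∼ y`: `x ≼ y` and `y ≼ x`. -/
def EndsEquiv (F : Set E) (x y : E) : Prop := EndsLE F x y ∧ EndsLE F y x

/-- `x` is a maximal end. -/
def MaximalEnd (F : Set E) (x : E) : Prop := ∀ y, EndsLE F x y → EndsLE F y x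

/-- `M(E)`, the set of maximal ends. -/
def MaxSet (F : Set E) : Set E := {x | MaximalEnd F x}

/-- `(E, F)` is uniformly self-similar: it is self-similar, `M(E)` is a single
`∼`-equivalence class, and `M(E)` is homeomorphic to the Cantor space `ℕ → Bool`. -/
def UniformlySelfSimilar (F : Set E) : Prop :=
  SelfSimilarPair F ∧
  (∃ x, MaxSet F = {y | EndsEquiv F x y}) ∧
  Nonempty (↥(MaxSet F) ≃ₜ (ℕ → Bool))

/-- The group `Homeo(E,F)` of homeomorphisms of `E` preserving `F`,
as a subgroup of the permutation group of `E`. -/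
def EndsHomeo (F : Set E) : Subgroup (Equiv.Perm E) where
  carrier := {h | Continuous h ∧ Continuous h.symm ∧ ∀ x, h x ∈ F ↔ x ∈ F}
  one_mem' := ⟨continuous_id, continuous_id, fun _ => Iff.rfl⟩
  mul_mem' := by
    rintro a b ⟨ha1, ha2, ha3⟩ ⟨hb1, hb2, hb3⟩
    refine ⟨?_, ?_, fun x => ?_⟩
    · exact ha1.comp hb1
    · exact hb2.comp ha2
    · exact (ha3 (b x)).trans (hb3 x)
  inv_mem' := by
    rintro a ⟨ha1, ha2, ha3⟩
    refine ⟨ha2, ha1, fun x => ?_⟩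
    have h := ha3 (a⁻¹ x)
    rw [show a (a⁻¹ x) = x from a.apply_symm_apply x] at h
    exact h.symm

/-- A half-space of `(E,F)`: a clopen set meeting `M(E)` in a nonempty proper subset. -/
def IsHalfSpace (F H : Set E) : Prop :=
  IsClopen H ∧ (H ∩ MaxSet F).Nonempty ∧ H ∩ MaxSet F ⊂ MaxSet F

/-- `φ` is an `H`-translation: the sets `φⁿ(H)`, `n ∈ ℤ`, are pairwise disjoint. -/
def IsHTranslation (H : Set E) (φ : Equiv.Perm E) : Prop :=
  ∀ m n : ℤ, m ≠ n → Disjoint ((φ ^ m) '' H) ((φ ^ n) '' H)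

/-- A homeomorphism is supported on `H` if it fixes every point outside `H`. -/
def SupportedOn (H : Set E) (h : Equiv.Perm E) : Prop := ∀ x ∉ H, h x = x

end EndsSpace

/-!
Every maximal end of a uniformly self-similar ends space is a *copy point*: each of its clopen
neighbourhoods contains a clopen copy of `(E, F)`; and there are infinitely many maximal ends.
Near a copy point `z`, a clopen set `X` missing `z` has a sequence of pairwise disjoint clopen
copies converging to `z`. Gluing along such a chain gives a homeomorphism `E ≅ Xᶜ` (shift the
chain by one), and an Eilenberg swindle writes every homeomorphism supported on `X` as a
commutator. For `g ∈ Homeo(E, F)` pick a clopen `A` containing a copy point `m` and missing a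
copy point `p` and `g⁻¹ p`, and a copy `R` of `A` close to `p`. The complements of `g A ∪ R` and
`A ∪ R` are both homeomorphic to `E`, which produces a commutator agreeing with `g⁻¹` on `g A`;
composed with `g` it is supported off `A ∋ m`, hence is a commutator too.
-/

section PairHomeoOn

open Set

variable {E : Type*} [TopologicalSpace E] {F A B C : Set E} {f f' g g' : E → E}

theorem continuousOn_piecewise_union {s t : Set E} [∀ x, Decidable (x ∈ s)]
    (hs : IsOpen s) (ht : IsOpen t) (hst : Disjoint s t) (hf : ContinuousOn f s)
    (hg : ContinuousOn g t) : ContinuousOn (s.piecewise f g) (s ∪ t) := by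
  refine (hs.union ht).continuousOn_iff.2 ?_
  rintro x (hx | hx)
  · exact (hf.continuousAt (hs.mem_nhds hx)).congr
      ((piecewise_eqOn s f g).symm.eventuallyEq_of_mem (hs.mem_nhds hx))
  · exact (hg.continuousAt (ht.mem_nhds hx)).congr
      ((piecewise_eqOn_compl s f g).symm.eventuallyEq_of_mem
        (Filter.mem_of_superset (ht.mem_nhds hx) hst.subset_compl_left))

/-- A homeomorphism of pairs `(A, A ∩ F) → (B, B ∩ F)` with inverse `f'`, presented by maps of the
whole space so that such maps can be glued (cf. `pairHomeo_iff_exists_pairHomeoOn`). -/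
structure PairHomeoOn (F A B : Set E) (f f' : E → E) : Prop where
  mapsTo : MapsTo f A B
  mapsTo_inv : MapsTo f' B A
  invOn : InvOn f' f A B
  continuousOn : ContinuousOn f A
  continuousOn_inv : ContinuousOn f' B
  mem_iff : ∀ x ∈ A, f x ∈ F ↔ x ∈ F

namespace PairHomeoOn

protected theorem id (F A : Set E) : PairHomeoOn F A A id id :=
  ⟨mapsTo_id A, mapsTo_id A, ⟨fun _ _ => rfl, fun _ _ => rfl⟩, continuousOn_id, continuousOn_id,
    fun _ _ => Iff.rfl⟩

protected theorem symm (h : PairHomeoOn F A B f f') : PairHomeoOn F B A f' f where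
  mapsTo := h.mapsTo_inv
  mapsTo_inv := h.mapsTo
  invOn := h.invOn.symm
  continuousOn := h.continuousOn_inv
  continuousOn_inv := h.continuousOn
  mem_iff y hy := by
    rw [← h.mem_iff _ (h.mapsTo_inv hy), h.invOn.2 hy]

theorem comp (h : PairHomeoOn F A B f f') (h' : PairHomeoOn F B C g g') :
    PairHomeoOn F A C (g ∘ f) (f' ∘ g') where
  mapsTo := h'.mapsTo.comp h.mapsTo
  mapsTo_inv := h.mapsTo_inv.comp h'.mapsTo_inv
  invOn := h.invOn.comp h'.invOn h.mapsTo h'.mapsTo_inv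
  continuousOn := h'.continuousOn.comp h.continuousOn h.mapsTo
  continuousOn_inv := h.continuousOn_inv.comp h'.continuousOn_inv h'.mapsTo_inv
  mem_iff x hx := (h'.mem_iff _ (h.mapsTo hx)).trans (h.mem_iff x hx)

theorem mono (h : PairHomeoOn F A B f f') (hCA : C ⊆ A) : PairHomeoOn F C (f '' C) f f' where
  mapsTo := mapsTo_image f C
  mapsTo_inv := by
    rintro _ ⟨x, hx, rfl⟩
    rwa [h.invOn.1 (hCA hx)]
  invOn := ⟨h.invOn.1.mono hCA, by rintro _ ⟨x, hx, rfl⟩; rw [h.invOn.1 (hCA hx)]⟩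
  continuousOn := h.continuousOn.mono hCA
  continuousOn_inv := h.continuousOn_inv.mono ((h.mapsTo.mono_left hCA).image_subset)
  mem_iff x hx := h.mem_iff x (hCA hx)

theorem image_eq_inter_preimage (h : PairHomeoOn F A B f f') (hCA : C ⊆ A) :
    f '' C = B ∩ f' ⁻¹' C := by
  rw [← inter_eq_left.2 hCA, h.invOn.1.image_inter, (h.invOn.bijOn h.mapsTo h.mapsTo_inv).image_eq,
    inter_comm]

theorem isClopen_image (h : PairHomeoOn F A B f f') (hB : IsClopen B) (hC : IsClopen C)
    (hCA : C ⊆ A) : IsClopen (f '' C) := by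
  rw [h.image_eq_inter_preimage hCA]
  exact ⟨h.continuousOn_inv.preimage_isClosed_of_isClosed hB.1 hC.1,
    h.continuousOn_inv.isOpen_inter_preimage hB.2 hC.2⟩

theorem of_mem_endsHomeo {g : Equiv.Perm E} (hg : g ∈ EndsHomeo F) (A : Set E) :
    PairHomeoOn F A (g '' A) g g.symm where
  mapsTo := mapsTo_image g A
  mapsTo_inv := by
    rintro _ ⟨x, hx, rfl⟩
    simpa using hx
  invOn := ⟨fun x _ => g.symm_apply_apply x, fun y _ => g.apply_symm_apply y⟩
  continuousOn := hg.1.continuousOn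
  continuousOn_inv := hg.2.1.continuousOn
  mem_iff x _ := hg.2.2 x

theorem union {A₁ A₂ B₁ B₂ : Set E} {f₁ f₁' f₂ f₂' : E → E} [∀ x, Decidable (x ∈ A₁)]
    [∀ x, Decidable (x ∈ B₁)] (h₁ : PairHomeoOn F A₁ B₁ f₁ f₁') (h₂ : PairHomeoOn F A₂ B₂ f₂ f₂')
    (hA₁ : IsOpen A₁) (hA₂ : IsOpen A₂) (hB₁ : IsOpen B₁) (hB₂ : IsOpen B₂)
    (hA : Disjoint A₁ A₂) (hB : Disjoint B₁ B₂) :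
    PairHomeoOn F (A₁ ∪ A₂) (B₁ ∪ B₂) (A₁.piecewise f₁ f₂) (B₁.piecewise f₁' f₂') where
  mapsTo := by
    rintro x (hx | hx)
    · simp [hx, h₁.mapsTo hx]
    · simp [hA.notMem_of_mem_right hx, h₂.mapsTo hx]
  mapsTo_inv := by
    rintro y (hy | hy)
    · simp [hy, h₁.mapsTo_inv hy]
    · simp [hB.notMem_of_mem_right hy, h₂.mapsTo_inv hy]
  invOn := by
    constructor
    · rintro x (hx | hx)
      · simp [hx, h₁.mapsTo hx, h₁.invOn.1 hx]
      · simp [hA.notMem_of_mem_right hx, hB.notMem_of_mem_right (h₂.mapsTo hx), h₂.invOn.1 hx]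
    · rintro y (hy | hy)
      · simp [hy, h₁.mapsTo_inv hy, h₁.invOn.2 hy]
      · simp [hB.notMem_of_mem_right hy, hA.notMem_of_mem_right (h₂.mapsTo_inv hy), h₂.invOn.2 hy]
  continuousOn := continuousOn_piecewise_union hA₁ hA₂ hA h₁.continuousOn h₂.continuousOn
  continuousOn_inv :=
    continuousOn_piecewise_union hB₁ hB₂ hB h₁.continuousOn_inv h₂.continuousOn_inv
  mem_iff := by
    rintro x (hx | hx)
    · simpa [hx] using h₁.mem_iff x hx
    · simpa [hA.notMem_of_mem_right hx] using h₂.mem_iff x hx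

theorem piecewise_compl [∀ x, Decidable (x ∈ A)] [∀ x, Decidable (x ∈ B)]
    (h₁ : PairHomeoOn F A B f f') (h₂ : PairHomeoOn F Aᶜ Bᶜ g g') (hA : IsClopen A)
    (hB : IsClopen B) : PairHomeoOn F univ univ (A.piecewise f g) (B.piecewise f' g') := by
  simpa using h₁.union h₂ hA.isOpen hA.compl.isOpen hB.isOpen hB.compl.isOpen
    disjoint_compl_right disjoint_compl_right

def toEndsHomeo (h : PairHomeoOn F univ univ f f') : EndsHomeo F :=
  ⟨⟨f, f', fun x => h.invOn.1 (mem_univ x), fun y => h.invOn.2 (mem_univ y)⟩,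
    continuousOn_univ.1 h.continuousOn, continuousOn_univ.1 h.continuousOn_inv,
    fun x => h.mem_iff x (mem_univ x)⟩

@[simp]
theorem coe_toEndsHomeo (h : PairHomeoOn F univ univ f f') :
    ⇑(h.toEndsHomeo : Equiv.Perm E) = f :=
  rfl

@[simp]
theorem coe_toEndsHomeo_symm (h : PairHomeoOn F univ univ f f') :
    ⇑(h.toEndsHomeo : Equiv.Perm E).symm = f' :=
  rfl

end PairHomeoOn

theorem IsClopen.image_of_mem_endsHomeo {g : Equiv.Perm E} (hA : IsClopen A)
    (hg : g ∈ EndsHomeo F) : IsClopen (g '' A) := by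
  rw [g.image_eq_preimage_symm]
  exact hA.preimage hg.2.1

theorem pairHomeo_iff_exists_pairHomeoOn :
    PairHomeo F A B ↔ ∃ f f', PairHomeoOn F A B f f' := by
  classical
  constructor
  · rintro ⟨e, he⟩
    have extend_continuousOn : ∀ {A B : Set E} (e : A ≃ₜ B),
        ContinuousOn (fun x => if hx : x ∈ A then (e ⟨x, hx⟩ : E) else x) A := fun e => by
      rw [continuousOn_iff_continuous_domRestrict, domRestrict_dite]
      exact continuous_subtype_val.comp e.continuous
    refine ⟨fun x => if hx : x ∈ A then e ⟨x, hx⟩ else x,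
      fun y => if hy : y ∈ B then e.symm ⟨y, hy⟩ else y, fun x hx => by simp [hx],
      fun y hy => by simp [hy], ⟨fun x hx => by simp [hx], fun y hy => by simp [hy]⟩,
      extend_continuousOn e, extend_continuousOn e.symm, fun x hx => by simpa [hx] using he ⟨x, hx⟩⟩
  · rintro ⟨f, f', h⟩
    exact ⟨⟨⟨h.mapsTo.restrict, h.mapsTo_inv.restrict, fun x => Subtype.ext (h.invOn.1 x.2),
      fun y => Subtype.ext (h.invOn.2 y.2)⟩, h.continuousOn.mapsToRestrict h.mapsTo,
      h.continuousOn_inv.mapsToRestrict h.mapsTo_inv⟩, fun x => h.mem_iff x x.2⟩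

namespace PairHomeo

protected theorem refl (F A : Set E) : PairHomeo F A A :=
  pairHomeo_iff_exists_pairHomeoOn.2 ⟨id, id, PairHomeoOn.id F A⟩

protected theorem symm (h : PairHomeo F A B) : PairHomeo F B A :=
  let ⟨f, f', h⟩ := pairHomeo_iff_exists_pairHomeoOn.1 h
  pairHomeo_iff_exists_pairHomeoOn.2 ⟨f', f, h.symm⟩

protected theorem trans (h : PairHomeo F A B) (h' : PairHomeo F B C) : PairHomeo F A C :=
  let ⟨_, _, h⟩ := pairHomeo_iff_exists_pairHomeoOn.1 h
  let ⟨_, _, h'⟩ := pairHomeo_iff_exists_pairHomeoOn.1 h'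
  pairHomeo_iff_exists_pairHomeoOn.2 ⟨_, _, h.comp h'⟩

theorem exists_isClopen_subset (h : PairHomeo F A B) (hB : IsClopen B) (hC : IsClopen C)
    (hCA : C ⊆ A) : ∃ D ⊆ B, IsClopen D ∧ PairHomeo F C D :=
  let ⟨f, _, h⟩ := pairHomeo_iff_exists_pairHomeoOn.1 h
  ⟨f '' C, (h.mapsTo.mono_left hCA).image_subset, h.isClopen_image hB hC hCA,
    pairHomeo_iff_exists_pairHomeoOn.2 ⟨_, _, h.mono hCA⟩⟩

end PairHomeo

end PairHomeoOn

section Glue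

open Set Filter Topology Function

variable {E ι : Type*} {X Y : ι → Set E} {f f' : ι → E → E}

open Classical in
noncomputable def glue (X : ι → Set E) (f : ι → E → E) (x : E) : E :=
  if h : ∃ i, x ∈ X i then f h.choose x else x

theorem glue_of_mem (hXd : Pairwise (Disjoint on X)) {i : ι} {x : E} (hx : x ∈ X i) :
    glue X f x = f i x := by
  have h : ∃ j, x ∈ X j := ⟨i, hx⟩
  rw [glue, dif_pos h, hXd.eq (not_disjoint_iff.2 ⟨x, h.choose_spec, hx⟩)]

theorem glue_of_notMem {x : E} (hx : x ∉ ⋃ i, X i) : glue X f x = x :=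
  dif_neg (by simpa using hx)

variable [TopologicalSpace E]

theorem continuousAt_glue_of_notMem (hXc : ∀ i, IsClosed (X i)) (hXd : Pairwise (Disjoint on X))
    (hf : ∀ i, MapsTo (f i) (X i) (Y i)) {x : E} (hx : x ∉ ⋃ i, X i)
    (h : ∀ V ∈ 𝓝 x, ∃ U ∈ 𝓝 x, ∀ᶠ i in cofinite, Disjoint (X i) U ∨ Y i ⊆ V) :
    ContinuousAt (glue X f) x := by
  rw [ContinuousAt, glue_of_notMem hx]
  intro V hV
  rw [mem_map]
  obtain ⟨U, hU, hgood⟩ := h V hV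
  have hbad : IsClosed (⋃ i ∈ {i | ¬(Disjoint (X i) U ∨ Y i ⊆ V)}, X i) :=
    hgood.isClosed_biUnion fun i _ => hXc i
  filter_upwards [hU, hV, hbad.isOpen_compl.mem_nhds fun hx' => hx (iUnion₂_subset_iUnion _ X hx')]
    with y hyU hyV hybad
  by_cases hy : y ∈ ⋃ i, X i
  · obtain ⟨i, hi⟩ := mem_iUnion.1 hy
    have hi_good : Disjoint (X i) U ∨ Y i ⊆ V := not_not.1 fun hi' => hybad (mem_biUnion hi' hi)
    rw [mem_preimage, glue_of_mem hXd hi]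
    exact hi_good.elim (fun hd => absurd hyU (hd.notMem_of_mem_left hi)) fun hs => hs (hf i hi)
  · rwa [mem_preimage, glue_of_notMem hy]

theorem continuous_glue [T2Space E] (hXc : ∀ i, IsClopen (X i)) (hXd : Pairwise (Disjoint on X))
    {p : E} (hX : Tendsto X cofinite (𝓝 p).smallSets) (hY : Tendsto Y cofinite (𝓝 p).smallSets)
    (hf : ∀ i, MapsTo (f i) (X i) (Y i)) (hfc : ∀ i, ContinuousOn (f i) (X i)) :
    Continuous (glue X f) := by
  refine continuous_iff_continuousAt.2 fun x => ?_
  by_cases hx : x ∈ ⋃ i, X i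
  · obtain ⟨i, hi⟩ := mem_iUnion.1 hx
    exact ((hfc i).continuousAt ((hXc i).isOpen.mem_nhds hi)).congr
      (eventuallyEq_of_mem ((hXc i).isOpen.mem_nhds hi) fun y hy => (glue_of_mem hXd hy).symm)
  refine continuousAt_glue_of_notMem (fun i => (hXc i).isClosed) hXd hf hx fun V hV => ?_
  rcases eq_or_ne x p with rfl | hxp
  · exact ⟨univ, univ_mem, (tendsto_smallSets_iff.1 hY V hV).mono fun i hi => Or.inr hi⟩
  · obtain ⟨u, v, hu, hv, hxu, hpv, huv⟩ := t2_separation hxp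
    exact ⟨u, hu.mem_nhds hxu, (tendsto_smallSets_iff.1 hX v (hv.mem_nhds hpv)).mono
      fun i hi => Or.inl (huv.symm.mono_left hi)⟩

theorem pairHomeoOn_glue [T2Space E] {F : Set E} (h : ∀ i, PairHomeoOn F (X i) (Y i) (f i) (f' i))
    (hXc : ∀ i, IsClopen (X i)) (hYc : ∀ i, IsClopen (Y i))
    (hXd : Pairwise (Disjoint on X)) (hYd : Pairwise (Disjoint on Y)) {p : E}
    (hX : Tendsto X cofinite (𝓝 p).smallSets) (hY : Tendsto Y cofinite (𝓝 p).smallSets)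
    (hYX : ⋃ i, Y i ⊆ ⋃ i, X i) :
    PairHomeoOn F univ ((⋃ i, X i)ᶜ ∪ ⋃ i, Y i) (glue X f) (glue Y f') where
  mapsTo x _ := by
    by_cases hx : x ∈ ⋃ i, X i
    · obtain ⟨i, hi⟩ := mem_iUnion.1 hx
      rw [glue_of_mem hXd hi]
      exact Or.inr (mem_iUnion.2 ⟨i, (h i).mapsTo hi⟩)
    · rw [glue_of_notMem hx]
      exact Or.inl hx
  mapsTo_inv := mapsTo_univ _ _
  invOn := by
    refine ⟨fun x _ => ?_, fun y hy => ?_⟩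
    · by_cases hx : x ∈ ⋃ i, X i
      · obtain ⟨i, hi⟩ := mem_iUnion.1 hx
        rw [glue_of_mem hXd hi, glue_of_mem hYd ((h i).mapsTo hi), (h i).invOn.1 hi]
      · rw [glue_of_notMem hx, glue_of_notMem fun hxY => hx (hYX hxY)]
    · by_cases hyY : y ∈ ⋃ i, Y i
      · obtain ⟨i, hi⟩ := mem_iUnion.1 hyY
        rw [glue_of_mem hYd hi, glue_of_mem hXd ((h i).mapsTo_inv hi), (h i).invOn.2 hi]
      · rw [glue_of_notMem hyY, glue_of_notMem (hy.resolve_right hyY)]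
  continuousOn := (continuous_glue hXc hXd hX hY (fun i => (h i).mapsTo)
    fun i => (h i).continuousOn).continuousOn
  continuousOn_inv := (continuous_glue hYc hYd hY hX (fun i => (h i).mapsTo_inv)
    fun i => (h i).continuousOn_inv).continuousOn
  mem_iff x _ := by
    by_cases hx : x ∈ ⋃ i, X i
    · obtain ⟨i, hi⟩ := mem_iUnion.1 hx
      rw [glue_of_mem hXd hi]
      exact (h i).mem_iff x hi
    · rw [glue_of_notMem hx]

end Glue

section CopyPoints

open Set

variable {E : Type*} [TopologicalSpace E] {F : Set E}

def copyPoints (F : Set E) : Set E :=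
  {z | ∀ U, IsClopen U → z ∈ U → ∃ D ⊆ U, IsClopen D ∧ PairHomeo F univ D}

theorem endsLE_of_mem_copyPoints {z : E} (hz : z ∈ copyPoints F) (y : E) : EndsLE F y z := by
  intro U hU hzU
  obtain ⟨D, hDU, hD, hcopy⟩ := hz U hU hzU
  exact ⟨D, hDU, hD, univ, isClopen_univ, mem_univ y, hcopy⟩

theorem mem_copyPoints_of_endsLE {z m : E} (hz : z ∈ copyPoints F) (hzm : EndsLE F z m) :
    m ∈ copyPoints F := by
  intro U hU hmU
  obtain ⟨D, hDU, hD, V, hV, hzV, hVD⟩ := hzm U hU hmU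
  obtain ⟨C, hCV, hC, hcopy⟩ := hz V hV hzV
  obtain ⟨D', hD'D, hD', hCD'⟩ := hVD.exists_isClopen_subset hD hC hCV
  exact ⟨D', hD'D.trans hDU, hD', hcopy.trans hCD'⟩

variable [CompactSpace E]

theorem exists_discreteQuotient_fiber_subset {U : E → Set E} (hU : ∀ x, IsClopen (U x))
    (hxU : ∀ x, x ∈ U x) : ∃ Q : DiscreteQuotient E, ∀ q : Q, ∃ x, Q.proj ⁻¹' {q} ⊆ U x := by
  obtain ⟨t, ht⟩ := isCompact_univ.elim_finite_subcover U (fun x => (hU x).isOpen)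
    fun x _ => mem_iUnion.2 ⟨x, hxU x⟩
  refine ⟨t.inf fun x => DiscreteQuotient.ofIsClopen (hU x), fun q => ?_⟩
  obtain ⟨y, rfl⟩ := DiscreteQuotient.proj_surjective _ q
  obtain ⟨x, hxt, hyx⟩ := mem_iUnion₂.1 (ht (mem_univ y))
  refine ⟨x, ?_⟩
  rw [DiscreteQuotient.fiber_eq]
  intro y' hy'
  exact (Finset.inf_le hxt : _ ≤ DiscreteQuotient.ofIsClopen (hU x)) hy' |>.1 hyx

theorem SelfSimilarPair.exists_subset_fiber (h : SelfSimilarPair F) (Q : DiscreteQuotient E) :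
    ∃ q : Q, ∃ D ⊆ Q.proj ⁻¹' {q}, IsClopen D ∧ PairHomeo F D univ := by
  let e := Finite.equivFin Q
  obtain ⟨i, D, hD, hDi, hDE⟩ := h _ (fun i => Q.proj ⁻¹' {e.symm i})
    (fun i => Q.isClopen_preimage _) (fun i => Q.proj_surjective _)
    (fun i j hij => (disjoint_singleton.2 (e.symm.injective.ne hij)).preimage _)
    (eq_univ_of_forall fun x => mem_iUnion.2 ⟨e (Q.proj x), by simp⟩)
  exact ⟨e.symm i, D, hDi, hD, hDE⟩

theorem SelfSimilarPair.copyPoints_nonempty (h : SelfSimilarPair F) :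
    (copyPoints F).Nonempty := by
  by_contra hempty
  have : ∀ x, ∃ U, IsClopen U ∧ x ∈ U ∧ ∀ D ⊆ U, IsClopen D → ¬PairHomeo F univ D := by
    intro x
    have hx : x ∉ copyPoints F := fun hx => hempty ⟨x, hx⟩
    simpa [copyPoints] using hx
  choose U hU hxU hno using this
  obtain ⟨Q, hQ⟩ := exists_discreteQuotient_fiber_subset hU hxU
  obtain ⟨q, D, hDq, hD, hDE⟩ := h.exists_subset_fiber Q
  obtain ⟨x, hqx⟩ := hQ q
  exact hno x D (hDq.trans hqx) hD hDE.symm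

theorem UniformlySelfSimilar.maxSet_subset_copyPoints (h : UniformlySelfSimilar F) :
    MaxSet F ⊆ copyPoints F := by
  obtain ⟨z, hz⟩ := h.1.copyPoints_nonempty
  obtain ⟨x₀, hM⟩ := h.2.1
  have hzM : z ∈ MaxSet F := fun y _ => endsLE_of_mem_copyPoints hz y
  intro m hm
  rw [hM] at hzM hm
  exact mem_copyPoints_of_endsLE (mem_copyPoints_of_endsLE hz hzM.2) hm.1

theorem UniformlySelfSimilar.copyPoints_infinite (h : UniformlySelfSimilar F) :
    (copyPoints F).Infinite := by
  obtain ⟨e⟩ := h.2.2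
  exact (infinite_coe_iff.1 (Infinite.of_injective e.symm e.symm.injective)).mono
    h.maxSet_subset_copyPoints

end CopyPoints

section Chains

open Set Filter Topology Function

variable {E : Type*} [TopologicalSpace E] [CompactSpace E] [T2Space E] [TotallyDisconnectedSpace E]
  {F X : Set E} {z : E}

theorem exists_copy_avoiding (hS : (copyPoints F).Nontrivial) (hz : z ∈ copyPoints F) {W : Set E}
    (hW : IsClopen W) (hzW : z ∈ W) (hX : IsClopen X) :
    ∃ K ⊆ W, IsClopen K ∧ z ∉ K ∧ PairHomeo F X K := by
  obtain ⟨C, hCW, hC, hEC⟩ := hz W hW hzW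
  obtain ⟨w, w', hw⟩ := pairHomeo_iff_exists_pairHomeoOn.1 hEC
  obtain ⟨y, hy, hyz⟩ := hS.exists_ne (w' z)
  obtain ⟨Q, hQ, hyQ, hQz⟩ := compact_exists_isClopen_in_isOpen isOpen_compl_singleton hyz
  obtain ⟨D, hDQ, hD, hED⟩ := hy Q hQ hyQ
  have hzD : z ∉ w '' D := by
    rintro ⟨x, hx, rfl⟩
    exact hQz (hDQ hx) (hw.invOn.1 (mem_univ x)).symm
  have hEwD : PairHomeo F univ (w '' D) :=
    hED.trans (pairHomeo_iff_exists_pairHomeoOn.2 ⟨w, w', hw.mono (subset_univ D)⟩)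
  obtain ⟨K, hKD, hK, hXK⟩ :=
    hEwD.exists_isClopen_subset (hw.isClopen_image hC hD (subset_univ D)) hX (subset_univ X)
  exact ⟨K, hKD.trans ((hw.mapsTo.mono_left (subset_univ D)).image_subset.trans hCW), hK,
    fun hzK => hzD (hKD hzK), hXK⟩

variable [FirstCountableTopology E]

theorem exists_disjoint_copies_tendsto (hS : (copyPoints F).Nontrivial) (hz : z ∈ copyPoints F)
    {W : Set E} (hW : IsClopen W) (hzW : z ∈ W) (hX : IsClopen X) :
    ∃ K : ℕ → Set E, (∀ n, K n ⊆ W) ∧ (∀ n, IsClopen (K n)) ∧ Pairwise (Disjoint on K) ∧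
      Tendsto K atTop (𝓝 z).smallSets ∧ ∀ n, PairHomeo F X (K n) := by
  obtain ⟨B, hB, hBasis⟩ := (nhds_basis_clopen z).exists_antitone_subbasis
  choose C hCB hC hzC hXC using fun n =>
    exists_copy_avoiding hS hz ((hB n).2.inter hW) ⟨(hB n).1, hzW⟩ hX
  have hnext : ∀ n, ∃ m, n < m ∧ Disjoint (C n) (B m) := by
    intro n
    obtain ⟨m, hm⟩ := hBasis.mem_iff.1 ((hC n).isClosed.isOpen_compl.mem_nhds (hzC n))
    have hBC : B (max m (n + 1)) ⊆ (C n)ᶜ := (hBasis.antitone (le_max_left _ _)).trans hm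
    exact ⟨max m (n + 1), by omega, subset_compl_iff_disjoint_left.1 hBC⟩
  choose next hlt hdisj using hnext
  set idx : ℕ → ℕ := fun k => next^[k] 0
  have hsucc : ∀ k, idx (k + 1) = next (idx k) := fun k => iterate_succ_apply' next k 0
  have hidx : StrictMono idx := strictMono_nat_of_lt_succ fun k => hsucc k ▸ hlt _
  refine ⟨C ∘ idx, fun n => (hCB _).trans inter_subset_right, fun n => hC _, ?_, ?_,
    fun n => hXC _⟩
  · refine (pairwise_disjoint_on _).2 fun k l hkl => (hdisj (idx k)).mono_right ?_
    rw [← hsucc]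
    exact (hCB _).trans (inter_subset_left.trans (hBasis.antitone (hidx.monotone hkl)))
  · exact (hBasis.tendsto_smallSets.comp hidx.tendsto_atTop).smallSets_mono
      (Eventually.of_forall fun n => (hCB _).trans inter_subset_left)

theorem exists_copy_chain (hS : (copyPoints F).Nontrivial) (hz : z ∈ copyPoints F)
    (hX : IsClopen X) (hzX : z ∉ X) :
    ∃ P : ℕ → Set E, P 0 = X ∧ (∀ n, IsClopen (P n)) ∧ Pairwise (Disjoint on P) ∧
      Tendsto P cofinite (𝓝 z).smallSets ∧ ∀ n, PairHomeo F X (P n) := by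
  obtain ⟨K, hKX, hK, hKd, hKz, hXK⟩ := exists_disjoint_copies_tendsto hS hz hX.compl hzX hX
  refine ⟨fun n => n.casesOn X K, rfl, ?_, ?_, ?_, ?_⟩
  · rintro (_ | n)
    exacts [hX, hK n]
  · refine (pairwise_disjoint_on _).2 ?_
    rintro (_ | m) (_ | n) hmn
    · omega
    · exact subset_compl_iff_disjoint_left.1 (hKX n)
    · omega
    · exact hKd (by omega)
  · rw [Nat.cofinite_eq_atTop, ← tendsto_add_atTop_iff_nat 1]
    exact hKz
  · rintro (_ | n)
    exacts [PairHomeo.refl F X, hXK n]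

theorem pairHomeo_univ_compl (hS : (copyPoints F).Nontrivial) (hz : z ∈ copyPoints F)
    (hX : IsClopen X) (hzX : z ∉ X) : PairHomeo F univ Xᶜ := by
  obtain ⟨P, rfl, hP, hPd, hPz, hXP⟩ := exists_copy_chain hS hz hX hzX
  choose v v' hv using fun n => pairHomeo_iff_exists_pairHomeoOn.1 (hXP n)
  have hPz' : Tendsto (fun n => P (n + 1)) cofinite (𝓝 z).smallSets :=
    hPz.comp (add_left_injective 1).tendsto_cofinite
  have h := pairHomeoOn_glue (fun n => (hv n).symm.comp (hv (n + 1))) hP (fun n => hP (n + 1)) hPd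
    (hPd.comp_of_injective (add_left_injective 1)) hPz hPz'
    (iUnion_subset fun n => subset_iUnion P (n + 1))
  have hsucc : ⋃ n, P (n + 1) ⊆ (P 0)ᶜ :=
    iUnion_subset fun n => (hPd (Nat.succ_ne_zero n)).subset_compl_right
  rw [← union_iUnion_nat_succ P, compl_union, inter_union_distrib_right, compl_union_self,
    inter_univ, union_eq_left.2 hsucc] at h
  exact pairHomeo_iff_exists_pairHomeoOn.2 ⟨_, _, h⟩

end Chains

section Commutators

open Set Filter Topology Function
open scoped commutatorElement

variable {E : Type*} {F X : Set E}

theorem SupportedOn.image_eq {h : Equiv.Perm E} (hh : SupportedOn X h) : h '' X = X := by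
  have hc : h '' Xᶜ = Xᶜ := EqOn.image_eq_self fun x hx => hh x hx
  rw [← compl_compl X, h.image_compl, hc]

theorem union_compl_union_eq_compl {S R : Set E} (h : Disjoint S R) : R ∪ (S ∪ R)ᶜ = Sᶜ := by
  rw [compl_union, union_inter_distrib_left, union_compl_self, inter_univ,
    union_eq_right.2 h.subset_compl_left]

/-- The swindle: `t a t⁻¹` is `a` without its copy of `h` on `Q 0 = X`, i.e. `t a t⁻¹ = h⁻¹ a`. -/
theorem swindle_mul_eq {Q : ℤ → Set E} {v v' : ℤ → E → E} {h a t : Equiv.Perm E}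
    (hQd : Pairwise (Disjoint on Q)) (hQ0 : Q 0 = X) (hv : ∀ n, MapsTo (v n) X (Q n))
    (hv' : ∀ n, MapsTo (v' n) (Q n) X) (hvv' : ∀ n, LeftInvOn (v' n) (v n) X) (hv0 : v 0 = id)
    (hh : SupportedOn X h) (hhX : MapsTo h X X)
    (ha : ∀ n, ∀ x ∈ Q n, a x = if 0 ≤ n then v n (h (v' n x)) else x)
    (ht : ∀ n, ∀ x ∈ Q n, t x = v (n + 1) (v' n x))
    (hat : ∀ x ∉ ⋃ n, Q n, a x = x ∧ t x = x) : h * (t * a) = a * t := by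
  have hfix : ∀ m ≠ 0, ∀ u ∈ Q m, h u = u := fun m hm u hu =>
    hh u fun huX => (hQd hm).notMem_of_mem_left hu (hQ0 ▸ huX)
  refine Equiv.ext fun x => (?_ : h (t (a x)) = a (t x))
  by_cases hx : x ∈ ⋃ n, Q n
  swap
  · simp only [(hat x hx).1, (hat x hx).2]
    exact hh x fun hxX => hx (mem_iUnion.2 ⟨0, hQ0 ▸ hxX⟩)
  obtain ⟨n, hn⟩ := mem_iUnion.1 hx
  have hy : v' n x ∈ X := hv' n hn
  rw [ht n x hn, ha _ _ (hv (n + 1) hy), hvv' (n + 1) hy, ha n x hn]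
  rcases lt_or_ge n 0 with hneg | hnonneg
  · rw [if_neg (not_le.2 hneg), ht n x hn]
    rcases eq_or_ne n (-1) with rfl | hn1
    · simp [hv0]
    · rw [if_neg (by omega), hfix _ (by omega) _ (hv (n + 1) hy)]
  · have hhy : h (v' n x) ∈ X := hhX hy
    rw [if_pos hnonneg, if_pos (by omega), ht n _ (hv n hhy), hvv' n hhy]
    exact hfix _ (by omega) _ (hv (n + 1) hhy)

variable [TopologicalSpace E]

theorem exists_pairHomeoOn_family {ι : Type*} {Q : ι → Set E} (i₀ : ι) (h₀ : Q i₀ = X)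
    (hQ : ∀ i, PairHomeo F X (Q i)) :
    ∃ v v' : ι → E → E, (∀ i, PairHomeoOn F X (Q i) (v i) (v' i)) ∧ v i₀ = id ∧ v' i₀ = id := by
  classical
  choose w w' hw using fun i => pairHomeo_iff_exists_pairHomeoOn.1 (hQ i)
  refine ⟨update w i₀ id, update w' i₀ id, fun i => ?_, update_self .., update_self ..⟩
  rcases eq_or_ne i i₀ with rfl | hi
  · simpa [h₀] using PairHomeoOn.id F X
  · simpa [hi] using hw i

/-- Take `c = g⁻¹` on `g A`, the identity on `R`, and the given homeomorphism on the rest, and let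
`τ` swap `g A` and `R`; then `⁅c, τ⁆ = g⁻¹` on `g A`. -/
theorem exists_commutatorElement_mul_supportedOn (g : EndsHomeo F) {A R : Set E}
    (hA : IsClopen A) (hR : IsClopen R) (hAR : Disjoint A R)
    (hgAR : Disjoint ((g : Equiv.Perm E) '' A) R) (hcopy : PairHomeo F A R)
    (hrest : PairHomeo F ((g : Equiv.Perm E) '' A ∪ R)ᶜ (A ∪ R)ᶜ) :
    ∃ c τ : EndsHomeo F, SupportedOn Aᶜ ((⁅c, τ⁆ * g : EndsHomeo F) : Equiv.Perm E) := by
  classical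
  obtain ⟨g, hg⟩ := g
  obtain ⟨σ, σ', hσ⟩ := pairHomeo_iff_exists_pairHomeoOn.1 hcopy
  obtain ⟨φ, φ', hφ⟩ := pairHomeo_iff_exists_pairHomeoOn.1 hrest
  have hgA := hA.image_of_mem_endsHomeo hg
  set gA := g '' A
  have hg' : PairHomeoOn F gA A g.symm g := (PairHomeoOn.of_mem_endsHomeo hg A).symm
  have hc := (PairHomeoOn.id F R).union hφ hR.isOpen (hgA.union hR).compl.isOpen hR.isOpen
    (hA.union hR).compl.isOpen (disjoint_compl_right_iff_subset.2 subset_union_right)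
    (disjoint_compl_right_iff_subset.2 subset_union_right)
  rw [union_compl_union_eq_compl hgAR, union_compl_union_eq_compl hAR] at hc
  have hτ := (hg'.comp hσ).union (hg'.comp hσ).symm hgA.isOpen hR.isOpen hR.isOpen hgA.isOpen
    hgAR hgAR.symm
  rw [union_comm R] at hτ
  refine ⟨(hg'.piecewise_compl hc hgA hA).toEndsHomeo,
    (hτ.piecewise_compl (PairHomeoOn.id F _) (hgA.union hR) (hgA.union hR)).toEndsHomeo,
    fun x hx => ?_⟩
  rw [notMem_compl_iff] at hx
  have hgx : g x ∈ gA := mem_image_of_mem g hx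
  have hσx : σ x ∈ R := hσ.mapsTo hx
  simp [commutatorElement_def, hgx, hσx, hgAR.notMem_of_mem_left hgx,
    hAR.notMem_of_mem_right hσx, hgAR.notMem_of_mem_right hσx, hσ.invOn.1 hx]

variable [CompactSpace E] [T2Space E] [TotallyDisconnectedSpace E] [FirstCountableTopology E]
  {z : E}

theorem exists_commutatorElement_eq_of_supportedOn (hS : (copyPoints F).Nontrivial)
    (hz : z ∈ copyPoints F) (hX : IsClopen X) (hzX : z ∉ X) (h : EndsHomeo F)
    (hh : SupportedOn X h) : ∃ a t : EndsHomeo F, h = ⁅a, t⁆ := by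
  classical
  obtain ⟨h, hmem⟩ := h
  obtain ⟨P, hP0, hP, hPd, hPz, hXP⟩ := exists_copy_chain hS hz hX hzX
  set Q : ℤ → Set E := P ∘ Equiv.intEquivNat
  have hQd : Pairwise (Disjoint on Q) := hPd.comp_of_injective Equiv.intEquivNat.injective
  have hQz : Tendsto Q cofinite (𝓝 z).smallSets :=
    hPz.comp Equiv.intEquivNat.injective.tendsto_cofinite
  obtain ⟨v, v', hv, hv0, -⟩ := exists_pairHomeoOn_family (Q := Q) 0 hP0 fun n => hXP _
  have hhX : PairHomeoOn F X X h h.symm := by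
    simpa [hh.image_eq] using PairHomeoOn.of_mem_endsHomeo hmem X
  have ht := pairHomeoOn_glue (fun n => (hv n).symm.comp (hv (n + 1))) (fun _ => hP _)
    (fun _ => hP _) hQd (hQd.comp_of_injective (add_left_injective 1)) hQz
    (hQz.comp (add_left_injective 1).tendsto_cofinite) (iUnion_subset fun n => subset_iUnion Q _)
  have hshift : ⋃ n, Q (n + 1) = ⋃ n, Q n := (Equiv.addRight (1 : ℤ)).surjective.iUnion_comp Q
  rw [hshift, compl_union_self] at ht
  have ha := pairHomeoOn_glue (X := Q) (Y := Q)
    (f := fun n => if 0 ≤ n then v n ∘ h ∘ v' n else id)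
    (f' := fun n => if 0 ≤ n then v n ∘ h.symm ∘ v' n else id)
    (fun n => by split_ifs; exacts [(hv n).symm.comp (hhX.comp (hv n)), PairHomeoOn.id F (Q n)])
    (fun _ => hP _) (fun _ => hP _) hQd hQd hQz hQz subset_rfl
  rw [compl_union_self] at ha
  refine ⟨ha.toEndsHomeo, ht.toEndsHomeo, Subtype.ext ?_⟩
  have hcomm := swindle_mul_eq (a := (ha.toEndsHomeo : Equiv.Perm E))
    (t := (ht.toEndsHomeo : Equiv.Perm E)) hQd hP0
    (fun n => (hv n).mapsTo) (fun n => (hv n).mapsTo_inv) (fun n => (hv n).invOn.1) hv0 hh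
    hhX.mapsTo
    (fun n x hx => by rw [PairHomeoOn.coe_toEndsHomeo, glue_of_mem hQd hx]; split_ifs <;> rfl)
    (fun n x hx => by rw [PairHomeoOn.coe_toEndsHomeo, glue_of_mem hQd hx]; rfl)
    fun x hx => by simp only [PairHomeoOn.coe_toEndsHomeo, glue_of_notMem hx, and_self]
  rw [commutatorElement_def, Subgroup.coe_mul, Subgroup.coe_mul, Subgroup.coe_mul, Subgroup.coe_inv,
    Subgroup.coe_inv, eq_mul_inv_of_mul_eq hcomm, mul_inv_rev, ← mul_assoc]

theorem exists_eq_commutatorElement_mul_commutatorElement (hS : (copyPoints F).Infinite)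
    (g : EndsHomeo F) : ∃ a b c d : EndsHomeo F, g = ⁅a, b⁆ * ⁅c, d⁆ := by
  obtain ⟨p, hp⟩ := hS.nonempty
  obtain ⟨m, hm, hmp⟩ := (hS.sdiff (toFinite {p, (g : Equiv.Perm E).symm p})).nonempty
  obtain ⟨A, hA, hmA, hAp⟩ :=
    compact_exists_isClopen_in_isOpen (toFinite _).isClosed.isOpen_compl hmp
  have hpA : p ∉ A := fun hpA => hAp hpA (mem_insert _ _)
  have hpgA : (g : Equiv.Perm E).symm p ∉ A := fun hpA => hAp hpA (mem_insert_of_mem _ rfl)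
  have hgA := hA.image_of_mem_endsHomeo g.2
  obtain ⟨R, hRW, hR, hpR, hcopy⟩ :=
    exists_copy_avoiding hS.nontrivial hp (hA.union hgA).compl (by simp [hpA, hpgA]) hA
  obtain ⟨hAR, hgAR⟩ := disjoint_union_left.1 (subset_compl_iff_disjoint_left.1 hRW)
  obtain ⟨c, τ, hw⟩ := exists_commutatorElement_mul_supportedOn g hA hR hAR hgAR hcopy
    ((pairHomeo_univ_compl hS.nontrivial hp (hgA.union hR) (by simp [hpgA, hpR])).symm.trans
      (pairHomeo_univ_compl hS.nontrivial hp (hA.union hR) (by simp [hpA, hpR])))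
  obtain ⟨a, t, hat⟩ :=
    exists_commutatorElement_eq_of_supportedOn hS.nontrivial hm hA.compl (not_not_intro hmA) _ hw
  exact ⟨τ, c, a, t, by rw [← hat, ← commutatorElement_inv, inv_mul_cancel_left]⟩

end Commutators

variable {E : Type*} [TopologicalSpace E] [Nonempty E] [CompactSpace E]
  [TopologicalSpace.MetrizableSpace E] [TotallyDisconnectedSpace E]

theorem endsHomeo_uniformly_perfect_general
    (F : Set E) (huss : UniformlySelfSimilar F) :
    ∀ g : ↥(EndsHomeo F), ∃ l : List ↥(EndsHomeo F), l.length ≤ 3 ∧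
      (∀ c ∈ l, ∃ a b : ↥(EndsHomeo F), c = a * b * a⁻¹ * b⁻¹) ∧ l.prod = g := by
  intro g
  obtain ⟨a, b, c, d, rfl⟩ :=
    exists_eq_commutatorElement_mul_commutatorElement huss.copyPoints_infinite g
  refine ⟨[a * b * a⁻¹ * b⁻¹, c * d * c⁻¹ * d⁻¹], by simp, ?_, by simp [commutatorElement_def]⟩
  simp only [List.mem_cons, List.not_mem_nil, or_false]
  rintro _ (rfl | rfl)
  exacts [⟨a, b, rfl⟩, ⟨c, d, rfl⟩]

theorem endsHomeo_uniformly_perfect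
    (F : Set E) (hF : IsClosed F) (huss : UniformlySelfSimilar F) :
    ∀ g : ↥(EndsHomeo F), ∃ l : List ↥(EndsHomeo F), l.length ≤ 3 ∧
      (∀ c ∈ l, ∃ a b : ↥(EndsHomeo F), c = a * b * a⁻¹ * b⁻¹) ∧ l.prod = g :=
  endsHomeo_uniformly_perfect_general F huss
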